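/- arXiv:2409.10098 — 2 statements merged into one kernel-verified Lean document; each statement's English description precedes it below -/
import Mathlib

section
/- For real matrices, there exists an n×p matrix H with (I − HC)F = 0 if and only if rank(CF) = rank(F). -/
open Matrix

theorem stmt_1 (n p q : ℕ) (F : Matrix (Fin n) (Fin q) ℝ) (C : Matrix (Fin p) (Fin n) ℝ) :
    (∃ H : Matrix (Fin n) (Fin p) ℝ, (1 - H * C) * F = 0) ↔ (C * F).rank = F.rank := by
  constructor
  · rintro ⟨H, hH⟩
    have hF : H * (C * F) = F := by
      have h2 : F - H * C * F = 0 := by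
        rw [← hH, Matrix.sub_mul, Matrix.one_mul]
      rw [← Matrix.mul_assoc]
      rw [sub_eq_zero] at h2
      exact h2.symm
    refine le_antisymm (Matrix.rank_mul_le_right C F) ?_
    calc F.rank = (H * (C * F)).rank := by rw [hF]
      _ ≤ (C * F).rank := Matrix.rank_mul_le_right _ _
  · intro hrank
    classical
    set f := (C * F).mulVecLin with hf
    set φ := F.mulVecLin with hφ
    have hker_le : LinearMap.ker φ ≤ LinearMap.ker f := by
      intro x hx
      simp only [LinearMap.mem_ker] at hx ⊢
      rw [hf, Matrix.mulVecLin_mul, LinearMap.comp_apply, hx, map_zero]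
    have hkerfin : LinearMap.ker φ = LinearMap.ker f := by
      apply Submodule.eq_of_le_of_finrank_eq hker_le
      have h1 := LinearMap.finrank_range_add_finrank_ker φ
      have h2 := LinearMap.finrank_range_add_finrank_ker f
      have : Module.finrank ℝ (LinearMap.range φ) = Module.finrank ℝ (LinearMap.range f) := by
        simpa [Matrix.rank] using hrank.symm
      omega
    obtain ⟨W, hW⟩ := (LinearMap.range f).exists_isCompl
    let π := (LinearMap.range f).linearProjOfIsCompl W hW
    let e := f.quotKerEquivRange
    let g : (Fin p → ℝ) →ₗ[ℝ] (Fin n → ℝ) :=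
      ((LinearMap.ker f).liftQ φ hkerfin.ge) ∘ₗ e.symm.toLinearMap ∘ₗ π
    have hg : g ∘ₗ f = φ := by
      apply LinearMap.ext; intro x
      have h1 : π (f x) = ⟨f x, LinearMap.mem_range_self f x⟩ :=
        Submodule.linearProjOfIsCompl_apply_left hW ⟨f x, LinearMap.mem_range_self f x⟩
      have h2 : e.symm ⟨f x, LinearMap.mem_range_self f x⟩ = (LinearMap.ker f).mkQ x :=
        f.quotKerEquivRange_symm_apply_image x _
      simp only [LinearMap.comp_apply, g, h1, LinearEquiv.coe_coe, h2, Submodule.mkQ_apply,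
        Submodule.liftQ_apply]
    refine ⟨LinearMap.toMatrix' g, ?_⟩
    have hmul : LinearMap.toMatrix' g * (C * F) = F := by
      apply Matrix.toLin'.injective
      rw [Matrix.toLin'_mul, Matrix.toLin'_toMatrix', Matrix.toLin'_apply', Matrix.toLin'_apply']
      exact hg
    rw [Matrix.sub_mul, Matrix.one_mul, Matrix.mul_assoc, hmul, sub_self]
end

section
/- (Theorem 1, Lyapunov dissipation form) Suppose there exist symmetric positive definite P, Q and matrices H, L₁ such that the 4×4 block matrix [[He(P(A−BK)+PΔA)+ε₁⁻¹ΔAᵀΔA, PBK, PF, Cₓᵀ],[*, He(Q(ΨA−L₁C))+ε₁QΨΨᵀQ, 0, Cₑᵀ],[*,*,−γ²I,0],[*,*,*,−I]] is negative definite, where Ψ = I − HC. Then for all x, e, d of appropriate dimensions, with V̇ₓ := xᵀHe(P(A−BK)+PΔA)x + 2xᵀPBKe + 2xᵀPFd and the error-Lyapunov bound, the dissipation inequality zᵀz − γ²dᵀd + V̇ₓ + V̇ₑ < 0 holds whenever (x,e,d) ≠ 0, where z = Cₓx + Cₑe and V̇ₑ := eᵀHe(Q(ΨA−L₁C))e +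 2eᵀQΨΔA x. -/
open Matrix

/-- Negative definiteness of a real matrix: `xᵀ M x < 0` for all `x ≠ 0`. -/
def Matrix.NegDef {l : Type*} [Fintype l] (M : Matrix l l ℝ) : Prop :=
  ∀ x : l → ℝ, x ≠ 0 → x ⬝ᵥ M *ᵥ x < 0

/-- `He(W) = W + Wᵀ`. -/
def Matrix.He {l : Type*} (W : Matrix l l ℝ) : Matrix l l ℝ := W + Wᵀ

private lemma dot_transpose {a b : ℕ} (M : Matrix (Fin a) (Fin b) ℝ)
    (u : Fin b → ℝ) (w : Fin a → ℝ) : u ⬝ᵥ Mᵀ *ᵥ w = w ⬝ᵥ M *ᵥ u := by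
  rw [Matrix.dotProduct_mulVec, Matrix.vecMul_transpose, dotProduct_comm,
    Matrix.dotProduct_mulVec]

theorem stmt_12 (n m p q : ℕ)
    (A ΔA P Q : Matrix (Fin n) (Fin n) ℝ) (B : Matrix (Fin n) (Fin m) ℝ)
    (K : Matrix (Fin m) (Fin n) ℝ) (F : Matrix (Fin n) (Fin q) ℝ)
    (C : Matrix (Fin p) (Fin n) ℝ) (H L₁ : Matrix (Fin n) (Fin p) ℝ)
    (Cx Ce : Matrix (Fin n) (Fin n) ℝ) (γ ε₁ : ℝ) (hγ : 0 < γ) (hε₁ : 0 < ε₁)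
    (hP : P.PosDef) (hQ : Q.PosDef)
    (Ψ : Matrix (Fin n) (Fin n) ℝ) (hΨ : Ψ = 1 - H * C)
    (hLMI :
      (Matrix.fromBlocks
        (Matrix.fromBlocks
          ((P * (A - B * K) + P * ΔA).He + ε₁⁻¹ • (ΔAᵀ * ΔA))
          (P * B * K)
          (P * B * K)ᵀ
          ((Q * (Ψ * A - L₁ * C)).He + ε₁ • (Q * Ψ * Ψᵀ * Q)))
        (Matrix.fromBlocks (P * F) Cxᵀ 0 Ceᵀ)
        (Matrix.fromBlocks (P * F) Cxᵀ 0 Ceᵀ)ᵀ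
        (Matrix.fromBlocks (-(γ ^ 2) • (1 : Matrix (Fin q) (Fin q) ℝ)) 0 0
          (-(1 : Matrix (Fin n) (Fin n) ℝ)))).NegDef) :
    ∀ (x e : Fin n → ℝ) (d : Fin q → ℝ), ¬(x = 0 ∧ e = 0 ∧ d = 0) →
      (Cx *ᵥ x + Ce *ᵥ e) ⬝ᵥ (Cx *ᵥ x + Ce *ᵥ e) - γ ^ 2 * (d ⬝ᵥ d)
        + (x ⬝ᵥ (P * (A - B * K) + P * ΔA).He *ᵥ x
            + 2 * (x ⬝ᵥ (P * B * K) *ᵥ e) + 2 * (x ⬝ᵥ (P * F) *ᵥ d))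
        + (e ⬝ᵥ (Q * (Ψ * A - L₁ * C)).He *ᵥ e + 2 * (e ⬝ᵥ (Q * Ψ * ΔA) *ᵥ x)) < 0 := by
  intro x e d hne
  set z : Fin n → ℝ := Cx *ᵥ x + Ce *ᵥ e with hz
  set a : Fin n → ℝ := ΔA *ᵥ x with ha
  set b : Fin n → ℝ := Ψᵀ *ᵥ (Q *ᵥ e) with hb
  have hv0 : ((x ⊕ᵥ e) ⊕ᵥ (d ⊕ᵥ z)) ≠ 0 := by
    intro h
    exact hne ⟨funext fun i => congrFun h (Sum.inl (Sum.inl i)),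
      funext fun i => congrFun h (Sum.inl (Sum.inr i)),
      funext fun i => congrFun h (Sum.inr (Sum.inl i))⟩
  have hM := hLMI ((x ⊕ᵥ e) ⊕ᵥ (d ⊕ᵥ z)) hv0
  simp only [Matrix.fromBlocks_mulVec, sumElim_dotProduct_sumElim,
    Sum.elim_comp_inl, Sum.elim_comp_inr, Matrix.fromBlocks_transpose,
    dotProduct_add, Matrix.add_mulVec, Matrix.transpose_zero,
    Matrix.zero_mulVec, Matrix.mulVec_zero, add_zero, zero_add,
    Matrix.neg_mulVec, Matrix.smul_mulVec, Matrix.one_mulVec,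
    dotProduct_neg, dotProduct_smul, smul_eq_mul,
    Matrix.transpose_transpose, dot_transpose] at hM
  -- quadratic pieces
  have hQs : Qᵀ = Q := hQ.1.eq
  have h1 : x ⬝ᵥ (ΔAᵀ * ΔA) *ᵥ x = a ⬝ᵥ a := by
    rw [← Matrix.mulVec_mulVec, Matrix.dotProduct_mulVec, Matrix.vecMul_transpose, ha]
  have h2 : e ⬝ᵥ (Q * Ψ * Ψᵀ * Q) *ᵥ e = b ⬝ᵥ b := by
    rw [show Q * Ψ * Ψᵀ * Q = (Ψᵀ * Q)ᵀ * (Ψᵀ * Q) by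
      rw [Matrix.transpose_mul, Matrix.transpose_transpose, hQs, mul_assoc],
      ← Matrix.mulVec_mulVec, Matrix.dotProduct_mulVec, Matrix.vecMul_transpose,
      hb, Matrix.mulVec_mulVec]
  have h3 : e ⬝ᵥ (Q * Ψ * ΔA) *ᵥ x = b ⬝ᵥ a := by
    rw [show Q * Ψ * ΔA = (Ψᵀ * Q)ᵀ * ΔA by
      rw [Matrix.transpose_mul, Matrix.transpose_transpose, hQs],
      ← Matrix.mulVec_mulVec, Matrix.dotProduct_mulVec, Matrix.vecMul_transpose,
      hb, Matrix.mulVec_mulVec, ha]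
  have h4 : z ⬝ᵥ Cx *ᵥ x + z ⬝ᵥ Ce *ᵥ e = z ⬝ᵥ z := by
    rw [hz, dotProduct_add]
  -- the completed square
  have hsq : (0:ℝ) ≤ ε₁⁻¹ * ((a - ε₁ • b) ⬝ᵥ (a - ε₁ • b)) := by
    apply mul_nonneg (by positivity)
    exact Finset.sum_nonneg fun i _ => mul_self_nonneg _
  have hexp : (a - ε₁ • b) ⬝ᵥ (a - ε₁ • b)
      = a ⬝ᵥ a - 2 * ε₁ * (b ⬝ᵥ a) + ε₁ ^ 2 * (b ⬝ᵥ b) := by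
    simp only [sub_dotProduct, dotProduct_sub, smul_dotProduct,
      dotProduct_smul, smul_eq_mul, dotProduct_comm b a]
    ring
  rw [hexp] at hsq
  have hsq' : (0:ℝ) ≤ ε₁⁻¹ * (a ⬝ᵥ a) - 2 * (b ⬝ᵥ a) + ε₁ * (b ⬝ᵥ b) := by
    have hid : ε₁⁻¹ * (a ⬝ᵥ a - 2 * ε₁ * (b ⬝ᵥ a) + ε₁ ^ 2 * (b ⬝ᵥ b))
        = ε₁⁻¹ * (a ⬝ᵥ a) - 2 * (b ⬝ᵥ a) + ε₁ * (b ⬝ᵥ b) := by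
      field_simp
    linarith [hid ▸ hsq]
  -- expand He-block quadratics in hM
  simp only [Matrix.He, Matrix.add_mulVec, dotProduct_add, h1, h2, h3,
    Matrix.smul_mulVec, dotProduct_smul, smul_eq_mul,
    dot_transpose] at hM ⊢
  linarith [hM, hsq', h4]
end
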